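/- Let (Θ_H,Θ_V) be a torus-valued random pair whose Fourier coefficients φ_{H,V}[m,n] = E[e^{i(mΘ_H+nΘ_V)}] are not identically δ[m]δ[n] (i.e., the pair is not uniform on the torus). If a phase degradation by (Θ_i,Θ_o), independent of (Θ_H,Θ_V), can be undone by a subsequent phase degradation, then there exist integers a, b, not both zero, an integer k, and γ ∈ [0,2π) such that aΘ_i + bΘ_o = 2πk + γ almost surely. Equivalently, if no such deterministic linear relation among (Θ_i, Θ_o) modulo 2π holds almost surely, the degradation cannot be undone. -/

import Mathlib

open MeasureTheory ProbabilityTheory Complex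

instance : Fact (0 < 2 * Real.pi) := ⟨by positivity⟩

lemma norm_char (t : ℝ) : ‖Complex.exp (Complex.I * (t:ℂ))‖ = 1 := by
  simp [Complex.norm_exp]

lemma char_eq (r s x y : ℝ) :
    Complex.exp (Complex.I * ((r:ℂ) * (x:ℂ) + (s:ℂ) * (y:ℂ)))
      = Complex.exp (Complex.I * ((r*x + s*y : ℝ):ℂ)) := by
  push_cast; ring_nf

lemma measurable_char {α : Type*} [MeasurableSpace α] {f : α → ℝ} (hf : Measurable f) :
    Measurable fun x => Complex.exp (Complex.I * (f x : ℂ)) :=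
  Complex.measurable_exp.comp (measurable_const.mul (Complex.measurable_ofReal.comp hf))

lemma indep_integral_mul {Ω α β : Type*} [MeasurableSpace Ω] [MeasurableSpace α]
    [MeasurableSpace β] {μ : Measure Ω} [IsProbabilityMeasure μ] {X : Ω → α} {Y : Ω → β}
    (hX : Measurable X) (hY : Measurable Y) (h : IndepFun X Y μ)
    (f : α → ℂ) (g : β → ℂ) (hf : Measurable f) (hg : Measurable g) :
    ∫ ω, f (X ω) * g (Y ω) ∂μ = (∫ ω, f (X ω) ∂μ) * ∫ ω, g (Y ω) ∂μ := by
  have hmap := (ProbabilityTheory.indepFun_iff_map_prod_eq_prod_map_map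
    hX.aemeasurable hY.aemeasurable).mp h
  haveI : IsProbabilityMeasure (μ.map X) := Measure.isProbabilityMeasure_map hX.aemeasurable
  haveI : IsProbabilityMeasure (μ.map Y) := Measure.isProbabilityMeasure_map hY.aemeasurable
  have h1 : ∫ ω, f (X ω) * g (Y ω) ∂μ
      = ∫ p : α × β, f p.1 * g p.2 ∂(μ.map fun ω => (X ω, Y ω)) :=
    (integral_map (hX.aemeasurable.prodMk hY.aemeasurable)
      ((hf.comp measurable_fst).mul (hg.comp measurable_snd)).aestronglyMeasurable).symm
  rw [h1, hmap, integral_prod_mul,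
    integral_map hX.aemeasurable hf.aestronglyMeasurable,
    integral_map hY.aemeasurable hg.aestronglyMeasurable]

lemma eq_one_of_norm_eq_one_re_eq_one {z : ℂ} (hn : ‖z‖ = 1) (hr : z.re = 1) : z = 1 := by
  have h1 : Complex.normSq z = 1 := by
    rw [Complex.normSq_eq_norm_sq, hn]; norm_num
  have h2 : z.im ^ 2 = 0 := by
    have := Complex.normSq_apply z
    nlinarith
  have h3 : z.im = 0 := by nlinarith
  exact Complex.ext (by simpa using hr) (by simpa using h3)

lemma ae_eq_const_of_norm_integral_eq_one {Ω : Type*} [MeasurableSpace Ω] {μ : Measure Ω}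
    [IsProbabilityMeasure μ] {f : Ω → ℂ} (hm : Measurable f) (hnorm : ∀ ω, ‖f ω‖ = 1)
    (h1 : ‖∫ ω, f ω ∂μ‖ = 1) : ∀ᵐ ω ∂μ, f ω = ∫ ω, f ω ∂μ := by
  set c := ∫ ω, f ω ∂μ with hc
  have hint : Integrable f μ := (integrable_const (1:ℝ)).mono'
    hm.aestronglyMeasurable (Filter.Eventually.of_forall fun ω => (hnorm ω).le)
  have hcc : (starRingEnd ℂ) c * c = 1 := by
    rw [mul_comm, Complex.mul_conj, Complex.normSq_eq_norm_sq, h1]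
    norm_num
  have hIc : ∫ ω, ((starRingEnd ℂ) c * f ω) ∂μ = 1 := by
    rw [integral_const_mul, ← hc, hcc]
  have hnormcf : ∀ ω, ‖(starRingEnd ℂ) c * f ω‖ = 1 := fun ω => by
    rw [norm_mul, RCLike.norm_conj, h1, hnorm ω, one_mul]
  set g : Ω → ℝ := fun ω => 1 - ((starRingEnd ℂ) c * f ω).re with hg
  have hg0 : 0 ≤ᵐ[μ] g := Filter.Eventually.of_forall fun ω => by
    have h2 : ((starRingEnd ℂ) c * f ω).re ≤ 1 := by
      have := RCLike.re_le_norm ((starRingEnd ℂ) c * f ω)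
      rw [hnormcf ω] at this
      simpa using this
    simp only [Pi.zero_apply, hg]; linarith
  have mg : Measurable g := measurable_const.sub
    (Complex.measurable_re.comp (measurable_const.mul hm))
  have hgi : Integrable g μ := (integrable_const (2:ℝ)).mono' mg.aestronglyMeasurable
    (Filter.Eventually.of_forall fun ω => by
      have h2 : |((starRingEnd ℂ) c * f ω).re| ≤ 1 := by
        have := RCLike.abs_re_le_norm ((starRingEnd ℂ) c * f ω)
        rwa [hnormcf ω] at this
      rw [abs_le] at h2
      rw [Real.norm_eq_abs, abs_le]
      constructor <;> simp only [hg] <;> linarith)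
  have hre : Integrable (fun ω => ((starRingEnd ℂ) c * f ω).re) μ := by
    have h := (integrable_const (1:ℝ)).sub hgi
    have heq : (fun _ => (1:ℝ)) - g = fun ω => ((starRingEnd ℂ) c * f ω).re := by
      funext ω; simp only [Pi.sub_apply, hg]; ring
    rwa [heq] at h
  have hgzero : ∫ ω, g ω ∂μ = 0 := by
    rw [hg]
    rw [integral_sub (integrable_const 1) hre]
    have hir : ∫ ω, ((starRingEnd ℂ) c * f ω).re ∂μ = 1 := by
      have h2 := integral_re (𝕜 := ℂ) (hint.const_mul ((starRingEnd ℂ) c))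
      rw [hIc] at h2
      simpa only [RCLike.re_to_complex, Complex.one_re] using h2
    rw [hir, integral_const]
    simp
  have hgae : g =ᵐ[μ] 0 := (integral_eq_zero_iff_of_nonneg_ae hg0 hgi).mp hgzero
  filter_upwards [hgae] with ω hω
  have hre1 : ((starRingEnd ℂ) c * f ω).re = 1 := by
    simp only [hg, Pi.zero_apply] at hω; linarith
  have hone : (starRingEnd ℂ) c * f ω = 1 :=
    eq_one_of_norm_eq_one_re_eq_one (hnormcf ω) hre1
  have := congrArg (fun z => c * z) hone
  simp only [← mul_assoc] at this
  rw [mul_comm c ((starRingEnd ℂ) c), hcc, one_mul, mul_one] at this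
  exact this

/-- If the pair (Θ_H,Θ_V) is not uniform on the torus and a phase degradation by
(Θ_i,Θ_o) (independent of the channel) can be undone by a subsequent independent phase
degradation (Θ_i',Θ_o'), then some nontrivial integer combination aΘ_i + bΘ_o is almost
surely constant modulo 2π: aΘ_i + bΘ_o = 2πk + γ a.s. for integers a,b (not both zero),
an (ω-dependent) integer k and some γ ∈ [0,2π). -/
theorem phase_degradation_undone_implies_deterministic_relation
    {Ω : Type*} [MeasureSpace Ω] (μ : Measure Ω) [IsProbabilityMeasure μ]
    (ΘH ΘV Θi Θo Θi' Θo' : Ω → ℝ)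
    (hH : Measurable ΘH) (hV : Measurable ΘV) (hi : Measurable Θi) (ho : Measurable Θo)
    (hi' : Measurable Θi') (ho' : Measurable Θo')
    (hnonunif : ∃ m n : ℤ, ¬(m = 0 ∧ n = 0) ∧
      (∫ ω, Complex.exp (Complex.I * ((m : ℝ) * ΘH ω + (n : ℝ) * ΘV ω)) ∂μ) ≠ 0)
    (hindep1 : IndepFun (fun ω => (ΘH ω, ΘV ω)) (fun ω => (Θi ω, Θo ω)) μ)
    (hindep2 : IndepFun (fun ω => (ΘH ω, ΘV ω, Θi ω, Θo ω))
      (fun ω => (Θi' ω, Θo' ω)) μ)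
    (hundo : Measure.map (fun ω =>
        (((ΘH ω + Θo ω + Θi ω + Θo' ω + Θi' ω : ℝ) : AddCircle (2 * Real.pi)),
         ((ΘV ω + Θo ω + Θo' ω : ℝ) : AddCircle (2 * Real.pi)))) μ =
      Measure.map (fun ω =>
        ((ΘH ω : AddCircle (2 * Real.pi)), (ΘV ω : AddCircle (2 * Real.pi)))) μ) :
    ∃ a b : ℤ, ¬(a = 0 ∧ b = 0) ∧ ∃ γ : ℝ, 0 ≤ γ ∧ γ < 2 * Real.pi ∧
      ∀ᵐ ω ∂μ, ∃ k : ℤ,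
        (a : ℝ) * Θi ω + (b : ℝ) * Θo ω = 2 * Real.pi * k + γ := by
  obtain ⟨m, n, hmn, hφ⟩ := hnonunif
  have hπ : (Real.pi : ℂ) ≠ 0 := Complex.ofReal_ne_zero.mpr Real.pi_ne_zero
  -- the three characters
  set f1 : Ω → ℂ := fun ω => Complex.exp (Complex.I * ((m : ℝ) * ΘH ω + (n : ℝ) * ΘV ω))
    with hf1
  set f2 : Ω → ℂ := fun ω =>
    Complex.exp (Complex.I * (((m : ℝ) * Θi ω + ((m + n : ℤ) : ℝ) * Θo ω : ℝ) : ℂ)) with hf2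
  set f3 : Ω → ℂ := fun ω =>
    Complex.exp (Complex.I * (((m : ℝ) * Θi' ω + ((m + n : ℤ) : ℝ) * Θo' ω : ℝ) : ℂ)) with hf3
  have hn2 : ∀ ω, ‖f2 ω‖ = 1 := fun ω => norm_char _
  have hn3 : ∀ ω, ‖f3 ω‖ = 1 := fun ω => norm_char _
  have hn1 : ∀ ω, ‖f1 ω‖ = 1 := fun ω => by
    simp only [hf1]; rw [char_eq]; exact norm_char _
  -- measurability
  have hm1 : Measurable f1 := by
    rw [hf1]; fun_prop
  have hm2 : Measurable f2 := measurable_char ((hi.const_mul _).add (ho.const_mul _))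
  have hm3 : Measurable f3 := measurable_char ((hi'.const_mul _).add (ho'.const_mul _))
  -- Step 1: the Fourier coefficient identity from `hundo`
  set T := 2 * Real.pi with hT
  set g : AddCircle T × AddCircle T → ℂ := fun p => fourier m p.1 * fourier n p.2 with hgdef
  have hgc : Continuous g :=
    ((map_continuous (fourier m)).comp continuous_fst).mul
      ((map_continuous (fourier n)).comp continuous_snd)
  have hFm1 : Measurable fun ω =>
      (((ΘH ω + Θo ω + Θi ω + Θo' ω + Θi' ω : ℝ) : AddCircle T),
        ((ΘV ω + Θo ω + Θo' ω : ℝ) : AddCircle T)) :=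
    (AddCircle.measurable_mk'.comp ((((hH.add ho).add hi).add ho').add hi')).prodMk
      (AddCircle.measurable_mk'.comp ((hV.add ho).add ho'))
  have hFm0 : Measurable fun ω => ((ΘH ω : AddCircle T), (ΘV ω : AddCircle T)) :=
    (AddCircle.measurable_mk'.comp hH).prodMk (AddCircle.measurable_mk'.comp hV)
  have key : ∫ ω, g (((ΘH ω + Θo ω + Θi ω + Θo' ω + Θi' ω : ℝ) : AddCircle T),
        ((ΘV ω + Θo ω + Θo' ω : ℝ) : AddCircle T)) ∂μ
      = ∫ ω, g ((ΘH ω : AddCircle T), (ΘV ω : AddCircle T)) ∂μ := by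
    rw [← integral_map hFm1.aemeasurable hgc.measurable.aestronglyMeasurable,
      ← integral_map hFm0.aemeasurable hgc.measurable.aestronglyMeasurable, hundo]
  have hptw1 : ∀ ω, g (((ΘH ω + Θo ω + Θi ω + Θo' ω + Θi' ω : ℝ) : AddCircle T),
      ((ΘV ω + Θo ω + Θo' ω : ℝ) : AddCircle T)) = f1 ω * f2 ω * f3 ω := by
    intro ω
    rw [hgdef]
    simp only []
    rw [fourier_coe_apply, fourier_coe_apply, ← Complex.exp_add]
    rw [hf1, hf2, hf3]
    simp only []
    rw [← Complex.exp_add, ← Complex.exp_add]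
    congr 1
    rw [hT]
    push_cast
    field_simp
    ring
  have hptw0 : ∀ ω, g ((ΘH ω : AddCircle T), (ΘV ω : AddCircle T)) = f1 ω := by
    intro ω
    rw [hgdef]
    simp only []
    rw [fourier_coe_apply, fourier_coe_apply, ← Complex.exp_add]
    rw [hf1]
    simp only []
    congr 1
    rw [hT]
    push_cast
    field_simp
  simp only [hptw1, hptw0] at key
  -- key : ∫ f1 * f2 * f3 = ∫ f1
  -- Step 2: factor by independence
  have e2 : ∫ ω, (f1 ω * f2 ω) * f3 ω ∂μ
      = (∫ ω, f1 ω * f2 ω ∂μ) * ∫ ω, f3 ω ∂μ := by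
    exact indep_integral_mul (X := fun ω => (ΘH ω, ΘV ω, Θi ω, Θo ω))
      (Y := fun ω => (Θi' ω, Θo' ω))
      ((hH.prodMk (hV.prodMk (hi.prodMk ho)))) (hi'.prodMk ho') hindep2
      (fun q => Complex.exp (Complex.I * ((m : ℝ) * q.1 + (n : ℝ) * q.2.1)) *
        Complex.exp (Complex.I * (((m : ℝ) * q.2.2.1 + ((m + n : ℤ) : ℝ) * q.2.2.2 : ℝ) : ℂ)))
      (fun p => Complex.exp (Complex.I * (((m : ℝ) * p.1 + ((m + n : ℤ) : ℝ) * p.2 : ℝ) : ℂ)))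
      (by fun_prop) (by fun_prop)
  have e3 : ∫ ω, f1 ω * f2 ω ∂μ = (∫ ω, f1 ω ∂μ) * ∫ ω, f2 ω ∂μ := by
    exact indep_integral_mul (X := fun ω => (ΘH ω, ΘV ω)) (Y := fun ω => (Θi ω, Θo ω))
      (hH.prodMk hV) (hi.prodMk ho) hindep1
      (fun q => Complex.exp (Complex.I * ((m : ℝ) * q.1 + (n : ℝ) * q.2)))
      (fun p => Complex.exp (Complex.I * (((m : ℝ) * p.1 + ((m + n : ℤ) : ℝ) * p.2 : ℝ) : ℂ)))
      (by fun_prop) (by fun_prop)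
  rw [e2, e3] at key
  -- key : (∫f1 * ∫f2) * ∫f3 = ∫f1
  have hprod : (∫ ω, f2 ω ∂μ) * ∫ ω, f3 ω ∂μ = 1 := by
    apply mul_left_cancel₀ hφ
    rw [mul_one, ← mul_assoc]
    exact key
  -- Step 3: |∫ f2| = 1
  have h2le : ‖∫ ω, f2 ω ∂μ‖ ≤ 1 := by
    have := norm_integral_le_of_norm_le_const (μ := μ) (C := 1)
      (Filter.Eventually.of_forall fun ω => (hn2 ω).le)
    simpa using this
  have h3le : ‖∫ ω, f3 ω ∂μ‖ ≤ 1 := by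
    have := norm_integral_le_of_norm_le_const (μ := μ) (C := 1)
      (Filter.Eventually.of_forall fun ω => (hn3 ω).le)
    simpa using this
  have h2norm : ‖∫ ω, f2 ω ∂μ‖ = 1 := by
    have h := congrArg norm hprod
    rw [norm_mul, norm_one] at h
    nlinarith [norm_nonneg (∫ ω, f2 ω ∂μ), norm_nonneg (∫ ω, f3 ω ∂μ)]
  -- Step 4: f2 is a.s. constant
  have hae := ae_eq_const_of_norm_integral_eq_one hm2 hn2 h2norm
  set c := ∫ ω, f2 ω ∂μ with hcdef
  -- Step 5: write c = exp(γ i) with γ ∈ [0, 2π)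
  set θ := c.arg with hθ
  set γ := if 0 ≤ θ then θ else θ + 2 * Real.pi with hγ
  have hγ0 : 0 ≤ γ := by
    rw [hγ]; split
    · assumption
    · have := Complex.neg_pi_lt_arg c
      have := Real.pi_pos
      rw [← hθ] at *
      linarith
  have hγ2 : γ < 2 * Real.pi := by
    rw [hγ]; split
    · have := Complex.arg_le_pi c
      have := Real.pi_pos
      rw [← hθ] at *
      linarith
    · push_neg at *
      linarith
  have hcexp : c = Complex.exp ((γ : ℂ) * Complex.I) := by
    have h0 := Complex.norm_mul_exp_arg_mul_I c
    rw [h2norm, ← hθ] at h0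
    rw [Complex.ofReal_one, one_mul] at h0
    rw [hγ]; split_ifs with h
    · exact h0.symm
    · have heq : ((θ + 2 * Real.pi : ℝ) : ℂ) * Complex.I
          = (θ : ℂ) * Complex.I + 2 * (Real.pi : ℂ) * Complex.I := by push_cast; ring
      rw [heq, Complex.exp_add, Complex.exp_two_pi_mul_I, mul_one]
      exact h0.symm
  refine ⟨m, m + n, ?_, γ, hγ0, hγ2, ?_⟩
  · rintro ⟨ha, hb⟩; exact hmn ⟨ha, by omega⟩
  · filter_upwards [hae] with ω hω
    rw [hcexp] at hω
    simp only [hf2] at hω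
    obtain ⟨k, hk⟩ := Complex.exp_eq_exp_iff_exists_int.mp hω
    refine ⟨k, ?_⟩
    have h2 : Complex.I * (((m : ℝ) * Θi ω + ((m + n : ℤ) : ℝ) * Θo ω : ℝ) : ℂ)
        = Complex.I * ((2 * Real.pi * k + γ : ℝ) : ℂ) := by
      rw [hk]; push_cast; ring
    have h3 := mul_left_cancel₀ Complex.I_ne_zero h2
    have h4 := Complex.ofReal_inj.mp h3
    exact_mod_cast h4
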